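/- The function f(x) = (μ(1+κ)^{(μ+1)/2} / (γ̄ e^{μκ})) (x/(γ̄ κ))^{(μ−1)/2} e^{−μ(1+κ)x/γ̄} I_{μ−1}(2μ √(κ(1+κ)x/γ̄)) is a probability density on (0, ∞), i.e., ∫₀^∞ f(x) dx = 1. -/

import Mathlib

/-!
Put `m = μ - 1`, `a = μ (1 + κ) / γ̄` and `b = μ² κ (1 + κ) / γ̄`; the integrand is then a constant
times `√x ^ m * exp (-a x) * I_m (2 √(b x))`. Expanding `I_m` in its power series gives a series of
Gamma integrands `x ^ (k + m) * exp (-a x)` with nonnegative coefficients, so the integral may be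
taken termwise: each term contributes `(k + m)! / a ^ (k + m + 1)`, the factorials cancel, and what
is left is `√b ^ m / a ^ (m + 1)` times the exponential series of `b / a = μ κ`. The normalising
constant cancels exactly this.
-/

open Real MeasureTheory

/-- Modified Bessel function of the first kind of integer order `n`. -/
noncomputable def besselI (n : ℤ) (x : ℝ) : ℝ :=
  ∑' k : ℕ, (x / 2) ^ (2 * k + n.natAbs) /
    ((Nat.factorial k : ℝ) * (Nat.factorial (k + n.natAbs) : ℝ))

open Set Nat

theorem integral_pow_mul_exp_neg_mul_Ioi (n : ℕ) {a : ℝ} (ha : 0 < a) :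
    ∫ x in Ioi (0 : ℝ), x ^ n * exp (-(a * x)) = n ! / a ^ (n + 1) := by
  have h := integral_rpow_mul_exp_neg_mul_Ioi (a := (n : ℝ) + 1) (by positivity) ha
  simp only [add_sub_cancel_right, rpow_natCast, Gamma_nat_eq_factorial] at h
  rw [h, ← Nat.cast_add_one, rpow_natCast, one_div, inv_pow, inv_mul_eq_div]

theorem integrableOn_pow_mul_exp_neg_mul_Ioi (n : ℕ) {a : ℝ} (ha : 0 < a) :
    IntegrableOn (fun x : ℝ ↦ x ^ n * exp (-(a * x))) (Ioi 0) := by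
  simpa [rpow_natCast] using integrableOn_rpow_mul_exp_neg_mul_rpow (s := n) (p := 1)
    (by linarith [n.cast_nonneg (α := ℝ)]) zero_lt_one ha

theorem besselI_natCast_two_mul_sqrt (m : ℕ) {y : ℝ} (hy : 0 ≤ y) :
    besselI m (2 * √y) = ∑' k : ℕ, √y ^ m * y ^ k / (k ! * (k + m)! : ℝ) := by
  simp only [besselI, Int.natAbs_natCast]
  refine tsum_congr fun k ↦ ?_
  rw [mul_div_cancel_left₀ _ two_ne_zero, pow_add, pow_mul, sq_sqrt hy, mul_comm]

theorem integral_sqrt_pow_mul_exp_neg_mul_besselI (m : ℕ) {a b : ℝ} (ha : 0 < a) (hb : 0 ≤ b) :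
    ∫ x in Ioi (0 : ℝ), √x ^ m * exp (-(a * x)) * besselI m (2 * √(b * x)) =
      √b ^ m * exp (b / a) / a ^ (m + 1) := by
  set c : ℕ → ℝ := fun k ↦ √b ^ m * b ^ k / (k ! * (k + m)! : ℝ)
  set F : ℕ → ℝ → ℝ := fun k x ↦ c k * (x ^ (k + m) * exp (-(a * x)))
  have hF_nonneg : ∀ k, ∀ x ∈ Ioi (0 : ℝ), 0 ≤ F k x := fun k x (hx : 0 < x) ↦ by
    simp only [F, c]; positivity
  have hF_int : ∀ k, IntegrableOn (F k) (Ioi 0) := fun k ↦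
    (integrableOn_pow_mul_exp_neg_mul_Ioi (k + m) ha).const_mul (c k)
  have hF_integral : ∀ k, ∫ x in Ioi (0 : ℝ), F k x =
      √b ^ m / a ^ (m + 1) * ((b / a) ^ k / k !) := fun k ↦ by
    simp only [F, c]
    rw [integral_const_mul, integral_pow_mul_exp_neg_mul_Ioi _ ha, div_pow, add_right_comm,
      pow_add, pow_add]
    field_simp
    ring
  have hseries : ∀ x ∈ Ioi (0 : ℝ),
      √x ^ m * exp (-(a * x)) * besselI m (2 * √(b * x)) = ∑' k, F k x := fun x (hx : 0 < x) ↦ by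
    rw [besselI_natCast_two_mul_sqrt m (by positivity), ← tsum_mul_left]
    refine tsum_congr fun k ↦ ?_
    simp only [F, c]
    rw [sqrt_mul hb, mul_pow, mul_pow, pow_add]
    have hsqrt_sq : √x ^ m * √x ^ m = x ^ m := by
      rw [← pow_add, ← two_mul, pow_mul, sq_sqrt hx.le]
    linear_combination (√b ^ m * b ^ k * x ^ k * exp (-(a * x)) / (k ! * (k + m)! : ℝ)) * hsqrt_sq
  have hsum : HasSum (fun k ↦ ∫ x in Ioi (0 : ℝ), F k x) (√b ^ m / a ^ (m + 1) * exp (b / a)) := by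
    simp only [hF_integral, exp_eq_exp_ℝ]
    exact (NormedSpace.expSeries_div_hasSum_exp (b / a)).mul_left _
  have hnorm : ∀ k, ∫ x in Ioi (0 : ℝ), ‖F k x‖ = ∫ x in Ioi (0 : ℝ), F k x := fun k ↦
    setIntegral_congr_fun measurableSet_Ioi fun x hx ↦ norm_of_nonneg (hF_nonneg k x hx)
  have hsum_integral := hasSum_integral_of_summable_integral_norm hF_int
    (by simpa only [hnorm] using hsum.summable)
  rw [setIntegral_congr_fun measurableSet_Ioi hseries, hsum_integral.unique hsum]
  ring

theorem kappaMu_integrand_eq (m : ℕ) {κ γbar x : ℝ} (hκ : 0 < κ) (hγ : 0 < γbar) (hx : 0 < x) :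
    ((m + 1 : ℕ) : ℝ) * (1 + κ) ^ ((((m + 1 : ℕ) : ℝ) + 1) / 2) /
        (γbar * exp (((m + 1 : ℕ) : ℝ) * κ)) * (x / (γbar * κ)) ^ ((((m + 1 : ℕ) : ℝ) - 1) / 2) *
      exp (-((m + 1 : ℕ) : ℝ) * (1 + κ) * x / γbar) *
      besselI (((m + 1 : ℕ) : ℤ) - 1) (2 * ((m + 1 : ℕ) : ℝ) * √(κ * (1 + κ) * x / γbar)) =
    (m + 1) * √(1 + κ) ^ (m + 2) / (γbar * exp ((m + 1) * κ)) / (√γbar * √κ) ^ m *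
      (√x ^ m * exp (-((m + 1) * (1 + κ) / γbar * x)) *
        besselI m (2 * √((m + 1) ^ 2 * (κ * (1 + κ) / γbar) * x))) := by
  have hpow₁ : (((m + 1 : ℕ) : ℝ) + 1) / 2 = ((m + 2 : ℕ) : ℝ) / 2 := by push_cast; ring
  have hpow₂ : (((m + 1 : ℕ) : ℝ) - 1) / 2 = (m : ℝ) / 2 := by push_cast; ring
  have harg : ((m + 1 : ℕ) : ℝ) * √(κ * (1 + κ) * x / γbar) =
      √((m + 1) ^ 2 * (κ * (1 + κ) / γbar) * x) := by
    rw [show (m + 1) ^ 2 * (κ * (1 + κ) / γbar) * x = (m + 1) ^ 2 * (κ * (1 + κ) * x / γbar) by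
        ring, sqrt_mul (by positivity), sqrt_sq (by positivity)]
    push_cast; ring
  rw [hpow₁, hpow₂, rpow_div_two_eq_sqrt _ (by positivity),
    rpow_div_two_eq_sqrt _ (by positivity : 0 ≤ x / (γbar * κ)),
    rpow_natCast, rpow_natCast, mul_assoc 2, harg, sqrt_div' _ (by positivity),
    sqrt_mul hγ.le, div_pow, show (((m + 1 : ℕ) : ℤ) - 1) = m by push_cast; ring]
  push_cast
  field_simp

theorem kappaMu_normalization (m : ℕ) {κ γbar : ℝ} (hκ : 0 < κ) (hγ : 0 < γbar) :
    (m + 1) * √(1 + κ) ^ (m + 2) / (γbar * exp ((m + 1) * κ)) / (√γbar * √κ) ^ m *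
      (√((m + 1) ^ 2 * (κ * (1 + κ) / γbar)) ^ m *
        exp ((m + 1) ^ 2 * (κ * (1 + κ) / γbar) / ((m + 1) * (1 + κ) / γbar)) /
        ((m + 1) * (1 + κ) / γbar) ^ (m + 1)) = 1 := by
  have hexp : (m + 1) ^ 2 * (κ * (1 + κ) / γbar) / ((m + 1) * (1 + κ) / γbar) = (m + 1) * κ := by
    field_simp
  have ha : (m + 1) * (1 + κ) / γbar = (m + 1) * √(1 + κ) ^ 2 / γbar := by
    rw [sq_sqrt (by positivity)]
  rw [hexp, ha, sqrt_mul (by positivity), sqrt_sq (by positivity), sqrt_div' _ (by positivity),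
    sqrt_mul hκ.le]
  -- with `γ̄ = t ^ 2` the only square roots left are `√κ` and `√(1 + κ)`, so `field_simp`
  -- clears all denominators
  obtain ⟨t, ht, rfl⟩ : ∃ t, 0 < t ∧ γbar = t ^ 2 := ⟨√γbar, sqrt_pos.2 hγ, (sq_sqrt hγ.le).symm⟩
  rw [sqrt_sq ht.le]
  simp only [div_pow, mul_pow, ← pow_mul]
  field_simp
  ring

theorem stmt_5 (μ : ℕ) (hμ : 1 ≤ μ) (κ γbar : ℝ) (hκ : 0 < κ) (hγ : 0 < γbar) :
    ∫ x in Set.Ioi (0:ℝ),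
      ((μ : ℝ) * (1 + κ) ^ (((μ : ℝ) + 1) / 2) / (γbar * Real.exp ((μ : ℝ) * κ))) *
        (x / (γbar * κ)) ^ (((μ : ℝ) - 1) / 2) *
        Real.exp (-(μ : ℝ) * (1 + κ) * x / γbar) *
        besselI ((μ : ℤ) - 1) (2 * (μ : ℝ) * Real.sqrt (κ * (1 + κ) * x / γbar)) = 1 := by
  obtain ⟨m, rfl⟩ := Nat.exists_eq_add_of_le' hμ
  rw [setIntegral_congr_fun measurableSet_Ioi fun x hx ↦ kappaMu_integrand_eq m hκ hγ hx,
    integral_const_mul, integral_sqrt_pow_mul_exp_neg_mul_besselI m (by positivity) (by positivity),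
    kappaMu_normalization m hκ hγ]
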